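/- If X follows Pareto(α) with α ∈ (0,1] and U1, U2 are iid uniform on (0,1), r = −1/α ≤ −1, then for 0 < η < θ ≤ 1/2 and every x ≥ 1, the function H(z) = ((x−z)/(1−z))^{1/r} + ∫_{((x−z)/(1−z))^{1/r}}^1 ((x−(1−z)y^{r})/z)^{1/r} dy is increasing in z on (0, 1/2]. -/

import Mathlib

open MeasureTheory ProbabilityTheory Real Finset

noncomputable section

variable {Ω : Type*} [MeasurableSpace Ω]

/-- `X ~ Pareto(α)` : cdf `1 - x^(-α)` for `x ≥ 1`. -/
def IsPareto (P : Measure Ω) (α : ℝ) (X : Ω → ℝ) : Prop :=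
  Measurable X ∧ (∀ x : ℝ, 1 ≤ x → P {ω | x < X ω} = ENNReal.ofReal (x ^ (-α))) ∧
    P {ω | X ω < 1} = 0

/-- the increasing rearrangement of a vector -/
def sortedVec {n : ℕ} (f : Fin n → ℝ) : Fin n → ℝ := f ∘ Tuple.sort f

/-- `MajorizedBy θ η` : `θ ⪯ η`, i.e. equal sums and the sum of the `k` smallest
components of `θ` is at least that of `η` for each `k`. -/
def MajorizedBy {n : ℕ} (θ η : Fin n → ℝ) : Prop :=
  (∑ i, θ i = ∑ i, η i) ∧
  ∀ k : ℕ, k ≤ n →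
    ∑ i ∈ Finset.univ.filter (fun i : Fin n => (i : ℕ) < k), sortedVec η i ≤
    ∑ i ∈ Finset.univ.filter (fun i : Fin n => (i : ℕ) < k), sortedVec θ i

/-!
Substituting `y = (x σ / (1 - z)) ^ (-α)` turns `H` into
`(1 - z)^α (x - z)^(-α) + α (z (1 - z))^α x^(-2α) ∫ σ^(-α-1) (1 - σ)^(-α) dσ`, the integral
taken over `[(1 - z) / x, (x - z) / x]`, so that `z` enters only through elementary factors and
the limits of integration. Its `z`-derivative is `x^(-2α) g(x)` with `g = scaledDeriv α · z`,
where `g(1) = 0` and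
`g'(t) = α² t^(2α-1) (t - 1) (z^(α-1) (t-1+z)^(-α-1) - (1-z)^(α-1) (t-z)^(-α-1))`.
For `z ≤ 1/2` we have `z ≤ 1 - z` and `t - 1 + z ≤ t - z`, and both exponents are nonpositive,
so `g' ≥ 0` on `[1, ∞)`; hence `g(x) ≥ 0` and `H` is monotone.
-/

namespace ParetoPortfolio

def kernel (α σ : ℝ) : ℝ := σ ^ (-α - 1) * (1 - σ) ^ (-α)

def kernelPrimitive (α t : ℝ) : ℝ := ∫ σ in (1 / 2 : ℝ)..t, kernel α σ

lemma continuousOn_kernel (α : ℝ) : ContinuousOn (kernel α) (Set.Ioo 0 1) :=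
  (continuousOn_id.rpow_const fun _ hσ => Or.inl hσ.1.ne').mul
    ((continuousOn_const.sub continuousOn_id).rpow_const fun _ hσ => Or.inl (sub_pos.2 hσ.2).ne')

lemma hasDerivAt_kernelPrimitive (α : ℝ) {t : ℝ} (ht : t ∈ Set.Ioo (0 : ℝ) 1) :
    HasDerivAt (kernelPrimitive α) (kernel α t) t :=
  intervalIntegral.integral_hasDerivAt_right
    (((continuousOn_kernel α).mono
      (Set.ordConnected_Ioo.uIcc_subset (by norm_num) ht)).intervalIntegrable)
    ((continuousOn_kernel α).stronglyMeasurableAtFilter isOpen_Ioo t ht)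
    ((continuousOn_kernel α).continuousAt (isOpen_Ioo.mem_nhds ht))

lemma integral_kernel (α : ℝ) {u v : ℝ} (hu : u ∈ Set.Ioo (0 : ℝ) 1)
    (hv : v ∈ Set.Ioo (0 : ℝ) 1) :
    ∫ σ in u..v, kernel α σ = kernelPrimitive α v - kernelPrimitive α u := by
  have hsub := Set.ordConnected_Ioo.uIcc_subset hu hv
  exact intervalIntegral.integral_eq_sub_of_hasDerivAt
    (fun σ hσ => hasDerivAt_kernelPrimitive α (hsub hσ))
    ((continuousOn_kernel α).mono hsub).intervalIntegrable

lemma kernel_div (α : ℝ) {u t : ℝ} (hu : 0 < u) (hut : u < t) :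
    kernel α (u / t) = t ^ (2 * α) * t * u ^ (-α - 1) * (t - u) ^ (-α) := by
  have ht : 0 < t := hu.trans hut
  have htu : 0 < t - u := sub_pos.2 hut
  rw [kernel, show 1 - u / t = (t - u) / t by field_simp, div_rpow hu.le ht.le,
    div_rpow htu.le ht.le, two_mul, rpow_add ht]
  simp only [rpow_sub_one ht.ne', rpow_sub_one hu.ne', rpow_neg ht.le, rpow_neg hu.le,
    rpow_neg htu.le]
  have := (rpow_pos_of_pos ht α).ne'
  field_simp

lemma integral_comp_rpow_neg {α a b : ℝ} (ha : 0 < a) (hab : a ≤ b) (hα : 0 ≤ α)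
    {f : ℝ → ℝ} (hf : ContinuousOn f (Set.Icc (b ^ (-α)) (a ^ (-α)))) :
    ∫ y in b ^ (-α)..a ^ (-α), f y = α * ∫ w in a..b, f (w ^ (-α)) * w ^ (-α - 1) := by
  have hpos : ∀ w ∈ Set.uIcc a b, 0 < w := fun w hw =>
    ha.trans_le (Set.uIcc_of_le hab ▸ hw).1
  have hmaps : (fun w => w ^ (-α)) '' Set.uIcc a b ⊆ Set.Icc (b ^ (-α)) (a ^ (-α)) := by
    rintro _ ⟨w, hw, rfl⟩
    rw [Set.uIcc_of_le hab] at hw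
    exact ⟨rpow_le_rpow_of_nonpos (ha.trans_le hw.1) hw.2 (by linarith),
      rpow_le_rpow_of_nonpos ha hw.1 (by linarith)⟩
  have hsubst := intervalIntegral.integral_comp_mul_deriv' (f := fun w => w ^ (-α))
    (fun w hw => hasDerivAt_rpow_const (Or.inl (hpos w hw).ne'))
    ((continuousOn_const.mul (continuousOn_id.rpow_const fun w hw => Or.inl (hpos w hw).ne')))
    (hf.mono hmaps)
  rw [intervalIntegral.integral_symm, ← hsubst, ← intervalIntegral.integral_const_mul,
    ← intervalIntegral.integral_neg]
  congr 1; ext w; simp only [Function.comp_apply]; ring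

lemma div_mem_Ioo_zero_one {u t : ℝ} (hu : 0 < u) (hut : u < t) : u / t ∈ Set.Ioo (0 : ℝ) 1 :=
  ⟨div_pos hu (hu.trans hut), (div_lt_one (hu.trans hut)).2 hut⟩

def portfolioCdf (α x z : ℝ) : ℝ :=
  (1 - z) ^ α * (x - z) ^ (-α) + α * (z * (1 - z)) ^ α * x ^ (-(2 * α)) *
    (kernelPrimitive α ((x - z) / x) - kernelPrimitive α ((1 - z) / x))

lemma integral_eq_mul_kernelPrimitive_sub {α x z : ℝ} (hx : 1 ≤ x) (hz0 : 0 < z)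
    (hz1 : z < 1) :
    ∫ w in (1 : ℝ)..(x - z) / (1 - z), ((x - (1 - z) * w) / z) ^ (-α) * w ^ (-α - 1) =
      (z * (1 - z)) ^ α * x ^ (-(2 * α)) *
        (kernelPrimitive α ((x - z) / x) - kernelPrimitive α ((1 - z) / x)) := by
  have hb : 0 < 1 - z := sub_pos.2 hz1
  have hx0 : 0 < x := one_pos.trans_le hx
  have hxz : 0 < x - z := by linarith
  have hu := div_mem_Ioo_zero_one hb (by linarith : 1 - z < x)
  have hv := div_mem_Ioo_zero_one hxz (by linarith : x - z < x)
  set c := x / (1 - z) with hc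
  have hscale := intervalIntegral.mul_integral_comp_mul_left (a := (1 - z) / x)
    (b := (x - z) / x) (f := fun w => ((x - (1 - z) * w) / z) ^ (-α) * w ^ (-α - 1)) c
  rw [show c * ((1 - z) / x) = 1 by rw [hc]; field_simp,
    show c * ((x - z) / x) = (x - z) / (1 - z) by rw [hc]; field_simp] at hscale
  rw [← hscale, ← integral_kernel α hu hv, ← intervalIntegral.integral_const_mul,
    ← intervalIntegral.integral_const_mul]
  refine intervalIntegral.integral_congr fun σ hσ => ?_
  obtain ⟨hσ0, hσ1⟩ := Set.ordConnected_Ioo.uIcc_subset hu hv hσ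
  have h1σ : 0 < 1 - σ := sub_pos.2 hσ1
  rw [show x - (1 - z) * (c * σ) = x * (1 - σ) by rw [hc]; field_simp]
  simp only [kernel, hc, div_rpow (mul_pos hx0 h1σ).le hz0.le, mul_rpow hx0.le h1σ.le,
    mul_rpow (div_pos hx0 hb).le hσ0.le, div_rpow hx0.le hb.le, mul_rpow hz0.le hb.le,
    rpow_sub_one hx0.ne', rpow_sub_one hb.ne', rpow_sub_one hσ0.ne', rpow_neg hx0.le,
    rpow_neg hz0.le, rpow_neg hb.le, rpow_neg hσ0.le, rpow_neg h1σ.le, two_mul, rpow_add hx0]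
  field_simp

lemma integral_eq_portfolioCdf {α x z : ℝ} (hα : 0 < α) (hx : 1 ≤ x) (hz0 : 0 < z)
    (hz1 : z < 1) :
    ((x - z) / (1 - z)) ^ (-α) +
      ∫ y in ((x - z) / (1 - z)) ^ (-α)..1, ((x - (1 - z) * y ^ (-1 / α)) / z) ^ (-α) =
    portfolioCdf α x z := by
  have hb : 0 < 1 - z := sub_pos.2 hz1
  have hxz : 0 < x - z := by linarith
  set q := (x - z) / (1 - z) with hq
  have hq1 : 1 ≤ q := (le_div_iff₀ hb).2 (by linarith)
  have hqα : 0 < q ^ (-α) := rpow_pos_of_pos (by positivity) _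
  have hinv : ∀ w : ℝ, 0 < w → (w ^ (-α)) ^ (-1 / α) = w := fun w hw => by
    rw [show -1 / α = (-α)⁻¹ by field_simp, rpow_rpow_inv hw.le (by linarith)]
  have hcont : ContinuousOn (fun y => ((x - (1 - z) * y ^ (-1 / α)) / z) ^ (-α))
      (Set.Icc (q ^ (-α)) ((1 : ℝ) ^ (-α))) := by
    refine ContinuousOn.rpow_const ?_ fun y hy => Or.inl ?_
    · exact (continuousOn_const.sub (continuousOn_const.mul (continuousOn_id.rpow_const
        fun y hy => Or.inl (hqα.trans_le hy.1).ne'))).div_const z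
    · have hyq : y ^ (-1 / α) ≤ q := hinv q (by positivity) ▸
        rpow_le_rpow_of_nonpos hqα hy.1 (div_nonpos_of_nonpos_of_nonneg (by norm_num) hα.le)
      have : (1 - z) * y ^ (-1 / α) ≤ x - z := by
        calc (1 - z) * y ^ (-1 / α) ≤ (1 - z) * q := mul_le_mul_of_nonneg_left hyq hb.le
          _ = x - z := by rw [hq]; field_simp
      exact (div_pos (by linarith) hz0).ne'
  have hsubst := integral_comp_rpow_neg zero_lt_one hq1 hα.le hcont
  rw [one_rpow] at hsubst
  have hintegrand : Set.EqOn
      (fun w => ((x - (1 - z) * (w ^ (-α)) ^ (-1 / α)) / z) ^ (-α) * w ^ (-α - 1))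
      (fun w => ((x - (1 - z) * w) / z) ^ (-α) * w ^ (-α - 1)) (Set.uIcc 1 q) := fun w hw => by
    rw [Set.uIcc_of_le hq1] at hw
    simp only [hinv w (one_pos.trans_le hw.1)]
  rw [hsubst, intervalIntegral.integral_congr hintegrand,
    integral_eq_mul_kernelPrimitive_sub hx hz0 hz1, portfolioCdf, hq, div_rpow hxz.le hb.le,
    rpow_neg hb.le, div_inv_eq_mul]
  ring

def scaledDeriv (α x z : ℝ) : ℝ :=
  α / (1 - z) * x ^ (2 * α) * (z ^ α * (x - 1 + z) ^ (-α) - (1 - z) ^ α * (x - z) ^ (-α)) +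
    α ^ 2 * (z * (1 - z)) ^ (α - 1) * (1 - 2 * z) *
      (kernelPrimitive α ((x - z) / x) - kernelPrimitive α ((1 - z) / x))

lemma hasDerivAt_portfolioCdf {α x z : ℝ} (hx : 1 ≤ x) (hz0 : 0 < z) (hz1 : z < 1) :
    HasDerivAt (portfolioCdf α x) (x ^ (-(2 * α)) * scaledDeriv α x z) z := by
  have hb : 0 < 1 - z := sub_pos.2 hz1
  have hx0 : 0 < x := one_pos.trans_le hx
  have hxz : 0 < x - z := by linarith
  have hxb : 0 < x - 1 + z := by linarith
  have hu := div_mem_Ioo_zero_one hb (by linarith : 1 - z < x)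
  have hv := div_mem_Ioo_zero_one hxz (by linarith : x - z < x)
  have hid := hasDerivAt_id' z
  have h1 := ((hid.const_sub 1).rpow_const (p := α) (Or.inl hb.ne')).mul
    ((hid.const_sub x).rpow_const (p := -α) (Or.inl hxz.ne'))
  have h2 := (((hid.mul (hid.const_sub 1)).rpow_const (p := α)
    (Or.inl (mul_pos hz0 hb).ne')).const_mul α).mul_const (x ^ (-(2 * α)))
  have h3 := ((hasDerivAt_kernelPrimitive α hv).comp z ((hid.const_sub x).div_const x)).sub
    ((hasDerivAt_kernelPrimitive α hu).comp z ((hid.const_sub 1).div_const x))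
  refine HasDerivAt.congr_deriv (f := portfolioCdf α x) (h1.add (h2.mul h3)) ?_
  rw [kernel_div α hxz (by linarith : x - z < x), kernel_div α hb (by linarith : 1 - z < x),
    show x - (1 - z) = x - 1 + z by ring]
  -- with every power written through `b ^ α` and `x ^ (2 * α)` the identity is rational
  simp only [scaledDeriv, Pi.mul_apply, mul_rpow hz0.le hb.le, rpow_sub_one hz0.ne',
    rpow_sub_one hb.ne', rpow_sub_one hxz.ne', rpow_neg hx0.le, rpow_neg hz0.le, rpow_neg hb.le,
    rpow_neg hxz.le, rpow_neg hxb.le, sub_sub_cancel]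
  have := (rpow_pos_of_pos hx0 (2 * α)).ne'
  field_simp
  ring

lemma hasDerivAt_scaledDeriv {α z t : ℝ} (hz0 : 0 < z) (hz1 : z < 1) (ht : 1 ≤ t) :
    HasDerivAt (fun t => scaledDeriv α t z) (α ^ 2 * t ^ (2 * α - 1) * (t - 1) *
      (z ^ (α - 1) * (t - 1 + z) ^ (-α - 1) - (1 - z) ^ (α - 1) * (t - z) ^ (-α - 1))) t := by
  have hb : 0 < 1 - z := sub_pos.2 hz1
  have ht0 : 0 < t := one_pos.trans_le ht
  have htz : 0 < t - z := by linarith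
  have htb : 0 < t - 1 + z := by linarith
  have hu := div_mem_Ioo_zero_one hb (by linarith : 1 - z < t)
  have hv := div_mem_Ioo_zero_one htz (by linarith : t - z < t)
  have hid := hasDerivAt_id' t
  have h1 := (hid.rpow_const (p := 2 * α) (Or.inl ht0.ne')).const_mul (α / (1 - z))
  have h2 := ((((hid.sub_const 1).add_const z).rpow_const (p := -α) (Or.inl htb.ne')).const_mul
    (z ^ α)).sub
      (((hid.sub_const z).rpow_const (p := -α) (Or.inl htz.ne')).const_mul ((1 - z) ^ α))
  have h3 := (((hasDerivAt_kernelPrimitive α hv).comp (h := fun s => (s - z) / s) t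
    ((hid.sub_const z).div hid ht0.ne')).sub ((hasDerivAt_kernelPrimitive α hu).comp
      (h := fun s => (1 - z) / s) t ((hasDerivAt_const t (1 - z)).div hid ht0.ne'))).const_mul
    (α ^ 2 * (z * (1 - z)) ^ (α - 1) * (1 - 2 * z))
  refine HasDerivAt.congr_deriv (f := fun t => scaledDeriv α t z) ((h1.mul h2).add h3) ?_
  rw [kernel_div α htz (by linarith : t - z < t), kernel_div α hb (by linarith : 1 - z < t),
    sub_sub_cancel, show t - (1 - z) = t - 1 + z by ring]
  simp only [Pi.sub_apply, mul_rpow hz0.le hb.le, rpow_sub_one hz0.ne', rpow_sub_one hb.ne',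
    rpow_sub_one htz.ne', rpow_sub_one htb.ne', rpow_sub_one ht0.ne', rpow_neg hz0.le,
    rpow_neg hb.le, rpow_neg htz.le, rpow_neg htb.le]
  have := (rpow_pos_of_pos ht0 (2 * α)).ne'
  field_simp
  ring

lemma scaledDeriv_one (α : ℝ) {z : ℝ} (hz0 : 0 < z) (hz1 : z < 1) :
    scaledDeriv α 1 z = 0 := by
  have hb : 0 < 1 - z := sub_pos.2 hz1
  rw [scaledDeriv, sub_self, zero_add, sub_self, ← rpow_add hz0, ← rpow_add hb, add_neg_cancel]
  simp

lemma rpow_mul_rpow_le_rpow_mul_rpow {a a' b b' β γ : ℝ} (ha : 0 < a) (haa' : a ≤ a')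
    (hb : 0 < b) (hbb' : b ≤ b') (hβ : β ≤ 0) (hγ : γ ≤ 0) :
    a' ^ β * b' ^ γ ≤ a ^ β * b ^ γ :=
  mul_le_mul (rpow_le_rpow_of_nonpos ha haa' hβ) (rpow_le_rpow_of_nonpos hb hbb' hγ)
    (rpow_nonneg (hb.trans_le hbb').le _) (rpow_nonneg ha.le _)

lemma monotoneOn_scaledDeriv {α z : ℝ} (hα0 : -1 ≤ α) (hα1 : α ≤ 1) (hz0 : 0 < z)
    (hz2 : z ≤ 1 / 2) : MonotoneOn (fun t => scaledDeriv α t z) (Set.Ici 1) := by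
  have hz1 : z < 1 := by linarith
  refine monotoneOn_of_hasDerivWithinAt_nonneg (convex_Ici 1)
    (fun t ht => (hasDerivAt_scaledDeriv hz0 hz1 ht).continuousAt.continuousWithinAt)
    (fun t ht => (hasDerivAt_scaledDeriv hz0 hz1 (interior_subset ht)).hasDerivWithinAt)
    fun t ht => ?_
  rw [interior_Ici, Set.mem_Ioi] at ht
  have hbracket := rpow_mul_rpow_le_rpow_mul_rpow hz0 (by linarith : z ≤ 1 - z)
    (by linarith : 0 < t - 1 + z) (by linarith : t - 1 + z ≤ t - z)
    (by linarith : α - 1 ≤ 0) (by linarith : -α - 1 ≤ 0)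
  exact mul_nonneg (mul_nonneg (mul_nonneg (sq_nonneg α) (rpow_nonneg (by linarith) _))
    (by linarith)) (sub_nonneg.2 hbracket)

lemma scaledDeriv_nonneg {α x z : ℝ} (hα0 : -1 ≤ α) (hα1 : α ≤ 1) (hx : 1 ≤ x)
    (hz0 : 0 < z) (hz2 : z ≤ 1 / 2) : 0 ≤ scaledDeriv α x z :=
  scaledDeriv_one α hz0 (by linarith) ▸
    monotoneOn_scaledDeriv hα0 hα1 hz0 hz2 Set.self_mem_Ici hx hx

lemma monotoneOn_portfolioCdf {α x : ℝ} (hα0 : -1 ≤ α) (hα1 : α ≤ 1) (hx : 1 ≤ x) :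
    MonotoneOn (portfolioCdf α x) (Set.Ioc 0 (1 / 2)) := by
  have hderiv : ∀ z ∈ Set.Ioc (0 : ℝ) (1 / 2),
      HasDerivAt (portfolioCdf α x) (x ^ (-(2 * α)) * scaledDeriv α x z) z :=
    fun z hz => hasDerivAt_portfolioCdf hx hz.1 (by linarith [hz.2])
  refine monotoneOn_of_hasDerivWithinAt_nonneg (convex_Ioc 0 (1 / 2))
    (fun z hz => (hderiv z hz).continuousAt.continuousWithinAt)
    (fun z hz => (hderiv z (interior_subset hz)).hasDerivWithinAt) fun z hz => ?_
  obtain ⟨hz0, hz2⟩ := interior_subset hz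
  exact mul_nonneg (rpow_nonneg (by linarith) _) (scaledDeriv_nonneg hα0 hα1 hx hz0 hz2)

end ParetoPortfolio

theorem stmt_3 (α : ℝ) (hα0 : 0 < α) (hα1 : α ≤ 1) (r : ℝ) (hr : r = -1 / α)
    (x : ℝ) (hx : 1 ≤ x) :
    MonotoneOn (fun z : ℝ =>
      ((x - z) / (1 - z)) ^ (1 / r) +
        ∫ y in (((x - z) / (1 - z)) ^ (1 / r))..1,
          ((x - (1 - z) * y ^ r) / z) ^ (1 / r))
      (Set.Ioc 0 (1 / 2 : ℝ)) := by
  have hexp : 1 / r = -α := by rw [hr]; field_simp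
  rw [hexp, hr]
  exact (ParetoPortfolio.monotoneOn_portfolioCdf (by linarith) hα1 hx).congr fun z hz =>
    (ParetoPortfolio.integral_eq_portfolioCdf hα0 hx hz.1 (by linarith [hz.2])).symm
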